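/- arXiv:1903.09223 — 4 statements merged into one kernel-verified Lean document; each statement's English description precedes it below -/
import Mathlib

section
/- Let M_1^0,…,M_N^0 be pairwise commuting real symmetric n×n matrices with common orthonormal eigenbasis v_1,…,v_n ∈ ℝ^n and M_i^0 v_α = λ_i^α v_α. Fix indices α ≠ β and a vector b ∈ ℝ^N, and define the symmetric matrices M̃_i := b_i (v_α v_βᵀ + v_β v_αᵀ). Then the linearized matrix Kuramoto operator satisfies, for each i: ∑_{j=1}^N ([M_j^0,[M̃_i, M_j^0]] + [M_j^0,[M_i^0, M̃_j]]) = ( (λ_i^α − λ_i^β) ∑_{j=1}^N b_j (λ_j^α − λ_j^β) − (∑_{j=1}^N (λ_j^α − λ_j^β)^2) b_i ) · (v_α v_βᵀ + v_β v_αᵀ). -/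
open Matrix BigOperators

/-- The matrix commutator `[A, B] = A * B - B * A`. -/
def matComm {n : ℕ} (A B : Matrix (Fin n) (Fin n) ℝ) : Matrix (Fin n) (Fin n) ℝ :=
  A * B - B * A

lemma mul_vecMulVec' {n : ℕ} (A : Matrix (Fin n) (Fin n) ℝ) (x y : Fin n → ℝ) :
    A * Matrix.vecMulVec x y = Matrix.vecMulVec (A.mulVec x) y := by
  ext a c
  simp [Matrix.mul_apply, Matrix.vecMulVec_apply, Matrix.mulVec, dotProduct,
    Finset.sum_mul, mul_assoc]

lemma vecMulVec_mul' {n : ℕ} (A : Matrix (Fin n) (Fin n) ℝ) (hA : A.IsSymm)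
    (x y : Fin n → ℝ) :
    Matrix.vecMulVec x y * A = Matrix.vecMulVec x (A.mulVec y) := by
  ext a c
  have : A.mulVec y c = ∑ k, y k * A k c := by
    simp only [Matrix.mulVec, dotProduct]
    refine Finset.sum_congr rfl fun k _ => ?_
    rw [mul_comm]
    congr 1
    have := congrArg (fun M => M c k) hA
    simpa [Matrix.transpose_apply] using this.symm
  simp [Matrix.mul_apply, Matrix.vecMulVec_apply, this, Finset.mul_sum, mul_assoc]

lemma vecMulVec_smul_left {n : ℕ} (c : ℝ) (x y : Fin n → ℝ) :
    Matrix.vecMulVec (c • x) y = c • Matrix.vecMulVec x y := by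
  ext a d; simp [Matrix.vecMulVec_apply, mul_assoc]

lemma vecMulVec_smul_right {n : ℕ} (c : ℝ) (x y : Fin n → ℝ) :
    Matrix.vecMulVec x (c • y) = c • Matrix.vecMulVec x y := by
  ext a d; simp [Matrix.vecMulVec_apply]; ring

/-- for pairwise commuting symmetric matrices `M_i⁰` with common orthonormal
eigenbasis `v_α` and eigenvalues `λ_i^α`, the linearized matrix Kuramoto operator acts on
the tuple `M̃_i = b_i (v_α v_βᵀ + v_β v_αᵀ)` (for fixed `α ≠ β`) by
`L(M̃)_i = ((λ_i^α−λ_i^β) ∑_j b_j (λ_j^α−λ_j^β) − (∑_j (λ_j^α−λ_j^β)²) b_i)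
  (v_α v_βᵀ + v_β v_αᵀ)`. -/
theorem linearized_operator_on_noncommuting_directions
    {n N : ℕ} (M0 : Fin N → Matrix (Fin n) (Fin n) ℝ)
    (hsymm : ∀ i, (M0 i).IsSymm)
    (hcomm : ∀ i j, M0 i * M0 j = M0 j * M0 i)
    (v : Fin n → (Fin n → ℝ))
    (horth : ∀ γ δ, v γ ⬝ᵥ v δ = if γ = δ then (1 : ℝ) else 0)
    (lam : Fin N → Fin n → ℝ)
    (heig : ∀ i γ, (M0 i).mulVec (v γ) = lam i γ • v γ)
    (α β : Fin n) (hαβ : α ≠ β)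
    (b : Fin N → ℝ)
    (Mt : Fin N → Matrix (Fin n) (Fin n) ℝ)
    (hMt : ∀ i, Mt i
      = b i • (Matrix.vecMulVec (v α) (v β) + Matrix.vecMulVec (v β) (v α))) :
    ∀ i, ∑ j, (matComm (M0 j) (matComm (Mt i) (M0 j))
          + matComm (M0 j) (matComm (M0 i) (Mt j)))
      = ((lam i α - lam i β) * (∑ j, b j * (lam j α - lam j β))
          - (∑ j, (lam j α - lam j β) ^ 2) * b i)
        • (Matrix.vecMulVec (v α) (v β) + Matrix.vecMulVec (v β) (v α)) := by
  intro i
  set E := Matrix.vecMulVec (v α) (v β) with hE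
  set F := Matrix.vecMulVec (v β) (v α) with hF
  have hLE : ∀ j, M0 j * E = lam j α • E := by
    intro j
    rw [hE, mul_vecMulVec', heig, vecMulVec_smul_left]
  have hLF : ∀ j, M0 j * F = lam j β • F := by
    intro j
    rw [hF, mul_vecMulVec', heig, vecMulVec_smul_left]
  have hRE : ∀ j, E * M0 j = lam j β • E := by
    intro j
    rw [hE, vecMulVec_mul' _ (hsymm j), heig, vecMulVec_smul_right]
  have hRF : ∀ j, F * M0 j = lam j α • F := by
    intro j
    rw [hF, vecMulVec_mul' _ (hsymm j), heig, vecMulVec_smul_right]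
  have key : ∀ j, matComm (M0 j) (matComm (Mt i) (M0 j))
      + matComm (M0 j) (matComm (M0 i) (Mt j))
      = ((lam i α - lam i β) * (b j * (lam j α - lam j β))
          - (lam j α - lam j β) ^ 2 * b i) • (E + F) := by
    intro j
    simp only [matComm, hMt, smul_mul_assoc, Matrix.mul_smul, Matrix.smul_mul,
      mul_add, add_mul, sub_mul, mul_sub, hLE, hLF, hRE, hRF, mul_smul_comm,
      smul_add, smul_sub, smul_smul]
    module
  rw [Finset.sum_congr rfl fun j _ => key j, ← Finset.sum_smul]
  congr 1
  rw [Finset.sum_sub_distrib, ← Finset.mul_sum, ← Finset.sum_mul]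
end

section
/- Let M_1^0,…,M_N^0 be pairwise commuting real symmetric n×n matrices with common orthonormal eigenbasis v_1,…,v_n and eigenvalues M_i^0 v_α = λ_i^α v_α. Fix α ≠ β, set μ := ∑_{j=1}^N (λ_j^α − λ_j^β)^2, and let b ∈ ℝ^N be a nonzero vector orthogonal to the vector (λ_1^α − λ_1^β,…,λ_N^α − λ_N^β). Then the N-tuple of symmetric matrices M̃_i := b_i (v_α v_βᵀ + v_β v_αᵀ) is an eigenvector of the linearized matrix Kuramoto operator L with eigenvalue −μ: for every i, ∑_{j=1}^N ([M_j^0,[M̃_i, M_j^0]] + [M_j^0,[M_i^0, M̃_j]]) = −μ M̃_i. -/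
open Matrix BigOperators

lemma matComm_smul_left {n : ℕ} (c : ℝ) (A B : Matrix (Fin n) (Fin n) ℝ) :
    matComm (c • A) B = c • matComm A B := by
  simp [matComm, smul_sub, Matrix.smul_mul, Matrix.mul_smul]

lemma matComm_smul_right {n : ℕ} (c : ℝ) (A B : Matrix (Fin n) (Fin n) ℝ) :
    matComm A (c • B) = c • matComm A B := by
  simp [matComm, smul_sub, Matrix.smul_mul, Matrix.mul_smul]

lemma matComm_add_right {n : ℕ} (A B C : Matrix (Fin n) (Fin n) ℝ) :
    matComm A (B + C) = matComm A B + matComm A C := by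
  simp only [matComm, mul_add, add_mul]; abel

lemma matComm_neg_right {n : ℕ} (A B : Matrix (Fin n) (Fin n) ℝ) :
    matComm A (-B) = - matComm A B := by
  simp [matComm]; abel

lemma matComm_antisymm {n : ℕ} (A B : Matrix (Fin n) (Fin n) ℝ) :
    matComm A B = - matComm B A := by
  simp [matComm, neg_sub]

/-- with `μ = ∑_j (λ_j^α−λ_j^β)²` and `b ≠ 0` orthogonal to the vector
`(λ_1^α−λ_1^β, …, λ_N^α−λ_N^β)`, the tuple `M̃_i = b_i (v_α v_βᵀ + v_β v_αᵀ)` is an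
eigenvector of the linearized matrix Kuramoto operator with eigenvalue `−μ`. -/
theorem linearized_operator_negative_eigenvalue
    {n N : ℕ} (M0 : Fin N → Matrix (Fin n) (Fin n) ℝ)
    (hsymm : ∀ i, (M0 i).IsSymm)
    (hcomm : ∀ i j, M0 i * M0 j = M0 j * M0 i)
    (v : Fin n → (Fin n → ℝ))
    (horth : ∀ γ δ, v γ ⬝ᵥ v δ = if γ = δ then (1 : ℝ) else 0)
    (lam : Fin N → Fin n → ℝ)
    (heig : ∀ i γ, (M0 i).mulVec (v γ) = lam i γ • v γ)
    (α β : Fin n) (hαβ : α ≠ β)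
    (μ : ℝ) (hμ : μ = ∑ j, (lam j α - lam j β) ^ 2)
    (b : Fin N → ℝ) (hb : b ≠ 0)
    (hperp : ∑ j, b j * (lam j α - lam j β) = 0)
    (Mt : Fin N → Matrix (Fin n) (Fin n) ℝ)
    (hMt : ∀ i, Mt i
      = b i • (Matrix.vecMulVec (v α) (v β) + Matrix.vecMulVec (v β) (v α))) :
    ∀ i, ∑ j, (matComm (M0 j) (matComm (Mt i) (M0 j))
          + matComm (M0 j) (matComm (M0 i) (Mt j)))
      = (-μ) • Mt i := by
  intro i
  set P := Matrix.vecMulVec (v α) (v β) with hPdef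
  set Q := Matrix.vecMulVec (v β) (v α) with hQdef
  -- left multiplication by M0 j
  have hmulL : ∀ (j : Fin N) (γ δ : Fin n),
      M0 j * Matrix.vecMulVec (v γ) (v δ) = lam j γ • Matrix.vecMulVec (v γ) (v δ) := by
    intro j γ δ
    ext r c
    have h := congrFun (heig j γ) r
    simp only [Matrix.mulVec, dotProduct, Pi.smul_apply, smul_eq_mul] at h
    simp only [Matrix.mul_apply, Matrix.vecMulVec_apply, Matrix.smul_apply, smul_eq_mul]
    calc ∑ k, M0 j r k * (v γ k * v δ c)
        = (∑ k, M0 j r k * v γ k) * v δ c := by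
          rw [Finset.sum_mul]; exact Finset.sum_congr rfl fun k _ => by ring
      _ = lam j γ * (v γ r * v δ c) := by rw [h]; ring
  -- right multiplication by M0 j
  have hmulR : ∀ (j : Fin N) (γ δ : Fin n),
      Matrix.vecMulVec (v γ) (v δ) * M0 j = lam j δ • Matrix.vecMulVec (v γ) (v δ) := by
    intro j γ δ
    ext r c
    have h := congrFun (heig j δ) c
    simp only [Matrix.mulVec, dotProduct, Pi.smul_apply, smul_eq_mul] at h
    simp only [Matrix.mul_apply, Matrix.vecMulVec_apply, Matrix.smul_apply, smul_eq_mul]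
    have hsym : ∀ k, M0 j k c = M0 j c k := fun k => by
      conv_lhs => rw [← (hsymm j)]
      rfl
    calc ∑ k, v γ r * v δ k * M0 j k c
        = v γ r * ∑ k, M0 j c k * v δ k := by
          rw [Finset.mul_sum]; exact Finset.sum_congr rfl fun k _ => by rw [hsym k]; ring
      _ = lam j δ * (v γ r * v δ c) := by rw [h]; ring
  have hP : ∀ j, matComm (M0 j) P = (lam j α - lam j β) • P := by
    intro j
    rw [matComm, hPdef, hmulL, hmulR, ← sub_smul]
  have hQ : ∀ j, matComm (M0 j) Q = (lam j β - lam j α) • Q := by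
    intro j
    rw [matComm, hQdef, hmulL, hmulR, ← sub_smul]
  have key : ∀ j, matComm (M0 j) (matComm (Mt i) (M0 j))
        + matComm (M0 j) (matComm (M0 i) (Mt j))
      = (-(b i) * (lam j α - lam j β) ^ 2
          + b j * (lam i α - lam i β) * (lam j α - lam j β)) • (P + Q) := by
    intro j
    have h1 : matComm (Mt i) (M0 j)
        = b i • (-((lam j α - lam j β) • P) + -((lam j β - lam j α) • Q)) := by
      rw [hMt i, matComm_smul_left, matComm_antisymm, matComm_add_right, hP, hQ]
      rw [neg_add]
    have h2 : matComm (M0 i) (Mt j)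
        = b j • ((lam i α - lam i β) • P + (lam i β - lam i α) • Q) := by
      rw [hMt j, matComm_smul_right, matComm_add_right, hP, hQ]
    rw [h1, h2]
    rw [matComm_smul_right, matComm_smul_right, matComm_add_right, matComm_add_right,
      matComm_neg_right, matComm_neg_right, matComm_smul_right, matComm_smul_right,
      matComm_smul_right, matComm_smul_right, hP j, hQ j]
    module
  have hsum : ∑ j, (matComm (M0 j) (matComm (Mt i) (M0 j))
        + matComm (M0 j) (matComm (M0 i) (Mt j)))
      = (∑ j, (-(b i) * (lam j α - lam j β) ^ 2
          + b j * (lam i α - lam i β) * (lam j α - lam j β))) • (P + Q) := by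
    rw [Finset.sum_smul]
    exact Finset.sum_congr rfl fun j _ => key j
  rw [hsum, hMt i, smul_smul]
  congr 1
  have h0 : ∑ j, b j * (lam i α - lam i β) * (lam j α - lam j β)
      = (lam i α - lam i β) * ∑ j, b j * (lam j α - lam j β) := by
    rw [Finset.mul_sum]; exact Finset.sum_congr rfl fun j _ => by ring
  rw [Finset.sum_add_distrib, h0, hperp, mul_zero, add_zero, hμ, ← Finset.mul_sum]
  ring
end

section
/- Let M_1^0,…,M_N^0 be pairwise commuting real symmetric n×n matrices. Then the linearized matrix Kuramoto operator is negative semidefinite: for every N-tuple M̃_1,…,M̃_N of real symmetric n×n matrices, ∑_{i=1}^N tr( M̃_i · ∑_{j=1}^N ([M_j^0,[M̃_i, M_j^0]] + [M_j^0,[M_i^0, M̃_j]]) ) ≤ 0. -/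
open Matrix BigOperators

lemma trace_mul_comm3 {n : ℕ} (A B X : Matrix (Fin n) (Fin n) ℝ) :
    Matrix.trace (A * (B * X - X * B)) = Matrix.trace ((A * B - B * A) * X) := by
  rw [Matrix.mul_sub, Matrix.sub_mul, Matrix.trace_sub, Matrix.trace_sub,
    Matrix.trace_mul_comm A (X * B), Matrix.mul_assoc, Matrix.trace_mul_comm X (B * A),
    ← Matrix.mul_assoc]

lemma trace_sq_nonpos {n : ℕ} (A : Matrix (Fin n) (Fin n) ℝ) (h : Aᵀ = -A) :
    Matrix.trace (A * A) ≤ 0 := by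
  have hA : ∀ i j, A i j = - A j i := by
    intro i j
    have := congrFun (congrFun h j) i
    simpa [Matrix.transpose_apply] using this
  have : Matrix.trace (A * A) = - ∑ i, ∑ j, (A j i)^2 := by
    simp only [Matrix.trace, Matrix.diag, Matrix.mul_apply]
    rw [← Finset.sum_neg_distrib]
    refine Finset.sum_congr rfl fun i _ => ?_
    rw [← Finset.sum_neg_distrib]
    refine Finset.sum_congr rfl fun j _ => ?_
    rw [hA i j]; ring
  rw [this]
  simp only [neg_nonpos]
  positivity

/-- the linearization of the matrix Kuramoto flow about a commuting fixed
point `(M_1⁰, …, M_N⁰)` is negative semidefinite: for every tuple of symmetric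
perturbations `M̃_i`, `∑_i tr(M̃_i · L(M̃)_i) ≤ 0`. -/
theorem linearized_operator_negative_semidefinite
    {n N : ℕ} (M0 : Fin N → Matrix (Fin n) (Fin n) ℝ)
    (hsymm : ∀ i, (M0 i).IsSymm)
    (hcomm : ∀ i j, M0 i * M0 j = M0 j * M0 i)
    (Mt : Fin N → Matrix (Fin n) (Fin n) ℝ)
    (hMt : ∀ i, (Mt i).IsSymm) :
    ∑ i, Matrix.trace (Mt i *
        ∑ j, (matComm (M0 j) (matComm (Mt i) (M0 j))
          + matComm (M0 j) (matComm (M0 i) (Mt j)))) ≤ 0 := by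
  set C : Fin N → Fin N → Matrix (Fin n) (Fin n) ℝ :=
    fun i j => matComm (Mt i) (M0 j) with hC
  have hCanti : ∀ i j, (C i j)ᵀ = -(C i j) := by
    intro i j
    simp only [hC, matComm, Matrix.transpose_sub, Matrix.transpose_mul,
      (hsymm j).eq, (hMt i).eq]
    abel
  -- rewrite each summand
  have key : ∀ i j, Matrix.trace (Mt i * (matComm (M0 j) (matComm (Mt i) (M0 j))
          + matComm (M0 j) (matComm (M0 i) (Mt j))))
      = Matrix.trace (C i j * C i j) - Matrix.trace (C i j * C j i) := by
    intro i j
    have h1 : Matrix.trace (Mt i * matComm (M0 j) (matComm (Mt i) (M0 j)))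
        = Matrix.trace (C i j * C i j) := by
      have := trace_mul_comm3 (Mt i) (M0 j) (matComm (Mt i) (M0 j))
      simpa [matComm, hC] using this
    have h2 : Matrix.trace (Mt i * matComm (M0 j) (matComm (M0 i) (Mt j)))
        = - Matrix.trace (C i j * C j i) := by
      have := trace_mul_comm3 (Mt i) (M0 j) (matComm (M0 i) (Mt j))
      have hneg : matComm (M0 i) (Mt j) = -(C j i) := by
        simp only [hC, matComm]; abel
      rw [show matComm (M0 j) (matComm (M0 i) (Mt j))
          = M0 j * matComm (M0 i) (Mt j) - matComm (M0 i) (Mt j) * M0 j from rfl] at *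
      rw [this, hneg]
      simp only [matComm, hC]
      rw [Matrix.mul_neg, Matrix.trace_neg]
    rw [Matrix.mul_add, Matrix.trace_add, h1, h2]
    ring
  have sum_eq : ∑ i, Matrix.trace (Mt i *
        ∑ j, (matComm (M0 j) (matComm (Mt i) (M0 j))
          + matComm (M0 j) (matComm (M0 i) (Mt j))))
      = ∑ i, ∑ j, (Matrix.trace (C i j * C i j) - Matrix.trace (C i j * C j i)) := by
    refine Finset.sum_congr rfl fun i _ => ?_
    rw [Matrix.mul_sum, Matrix.trace_sum]
    exact Finset.sum_congr rfl fun j _ => key i j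
  rw [sum_eq]
  have htwo : (∑ i, ∑ j, (Matrix.trace (C i j * C i j) - Matrix.trace (C i j * C j i))) * 2
      = ∑ i, ∑ j, Matrix.trace ((C i j - C j i) * (C i j - C j i)) := by
    have hswap : ∑ i, ∑ j, (Matrix.trace (C i j * C i j) - Matrix.trace (C i j * C j i))
        = ∑ i, ∑ j, (Matrix.trace (C j i * C j i) - Matrix.trace (C j i * C i j)) :=
      Finset.sum_comm ..
    have expand : ∀ i j, Matrix.trace ((C i j - C j i) * (C i j - C j i))
        = (Matrix.trace (C i j * C i j) - Matrix.trace (C i j * C j i))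
          + (Matrix.trace (C j i * C j i) - Matrix.trace (C j i * C i j)) := by
      intro i j
      rw [Matrix.sub_mul, Matrix.mul_sub, Matrix.mul_sub, Matrix.trace_sub,
        Matrix.trace_sub, Matrix.trace_sub]
      ring
    calc (∑ i, ∑ j, (Matrix.trace (C i j * C i j) - Matrix.trace (C i j * C j i))) * 2
        = (∑ i, ∑ j, (Matrix.trace (C i j * C i j) - Matrix.trace (C i j * C j i)))
          + (∑ i, ∑ j, (Matrix.trace (C j i * C j i) - Matrix.trace (C j i * C i j))) := by
          rw [← hswap]; ring
      _ = ∑ i, ∑ j, ((Matrix.trace (C i j * C i j) - Matrix.trace (C i j * C j i))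
          + (Matrix.trace (C j i * C j i) - Matrix.trace (C j i * C i j))) := by
          rw [← Finset.sum_add_distrib]
          exact Finset.sum_congr rfl fun i _ => (Finset.sum_add_distrib).symm
      _ = ∑ i, ∑ j, Matrix.trace ((C i j - C j i) * (C i j - C j i)) := by
          exact Finset.sum_congr rfl fun i _ => Finset.sum_congr rfl fun j _ =>
            (expand i j).symm
  have hnonpos : ∑ i, ∑ j, Matrix.trace ((C i j - C j i) * (C i j - C j i)) ≤ 0 := by
    refine Finset.sum_nonpos fun i _ => Finset.sum_nonpos fun j _ => ?_
    refine trace_sq_nonpos _ ?_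
    rw [Matrix.transpose_sub, hCanti, hCanti]
    abel
  nlinarith [htwo, hnonpos]
end

section
/- Let M_1^0,…,M_N^0 be pairwise commuting real symmetric n×n matrices and let Ω be a real skew-symmetric n×n matrix. Define M̃_i := [Ω, M_i^0] (which is symmetric). Then the linearized matrix Kuramoto operator vanishes on this tuple: for every i, ∑_{j=1}^N ([M_j^0,[M̃_i, M_j^0]] + [M_j^0,[M_i^0, M̃_j]]) = 0. In other words, the tangent directions to the orbit of simultaneous orthogonal conjugation lie in the kernel of the linearization. -/
open Matrix BigOperators

lemma matComm_key {n : ℕ} (A B Ω : Matrix (Fin n) (Fin n) ℝ) (h : A * B = B * A) :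
    matComm B (matComm (matComm Ω A) B) + matComm B (matComm A (matComm Ω B)) = 0 := by
  have e : matComm B (matComm (matComm Ω A) B) + matComm B (matComm A (matComm Ω B))
      = (A * B - B * A) * (Ω * B) + (B * Ω) * (A * B - B * A)
        + B * (B * A - A * B) * Ω + Ω * (B * A - A * B) * B := by
    simp only [matComm]
    noncomm_ring
  rw [e, h]
  simp

/-- for a commuting family of symmetric matrices `M_i⁰` and a skew-symmetric
`Ω`, the tuple `M̃_i = [Ω, M_i⁰]` consists of symmetric matrices and lies in the kernel of
the linearized matrix Kuramoto operator (tangent directions to the orbit of simultaneous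
orthogonal conjugation). -/
theorem linearized_operator_vanishes_on_rotation_directions
    {n N : ℕ} (M0 : Fin N → Matrix (Fin n) (Fin n) ℝ)
    (hsymm : ∀ i, (M0 i).IsSymm)
    (hcomm : ∀ i j, M0 i * M0 j = M0 j * M0 i)
    (Ω : Matrix (Fin n) (Fin n) ℝ) (hΩ : Ωᵀ = -Ω)
    (Mt : Fin N → Matrix (Fin n) (Fin n) ℝ)
    (hMt : ∀ i, Mt i = matComm Ω (M0 i)) :
    (∀ i, (Mt i).IsSymm)
    ∧ ∀ i, ∑ j, (matComm (M0 j) (matComm (Mt i) (M0 j))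
        + matComm (M0 j) (matComm (M0 i) (Mt j))) = 0 := by
  constructor
  · intro i
    rw [hMt i]
    unfold Matrix.IsSymm
    simp only [matComm, Matrix.transpose_sub, Matrix.transpose_mul, hΩ, (hsymm i).eq]
    noncomm_ring
  · intro i
    apply Finset.sum_eq_zero
    intro j _
    rw [hMt i, hMt j]
    exact matComm_key (M0 i) (M0 j) Ω (hcomm i j)
end
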